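/- arXiv:2505.02607 — 2 statements merged into one kernel-verified Lean document; each statement's English description precedes it below -/
import Mathlib

section
/- Strict monotonicity of expectiles: if X ≤ Y almost surely, X, Y ∈ L², and P(X < Y) > 0, then e_γ(X) < e_γ(Y) for every γ ∈ (0,1). -/
/-!
At a minimizer `e` of `phi`, the first-order condition says that the score
`y ↦ E[γ (X - y)⁺ - (1 - γ) (y - X)⁺]` vanishes; it follows from the quadratic upper bound
`phi (e + t) ≤ phi e - 2 t · score e + μ(Ω) t²`. The score is antitone in `y` and, for
`0 < γ < 1`, strictly increases from `X` to `Y` when `X ≤ Y` a.s. and `P(X < Y) > 0`.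
So if `eY ≤ eX`, then `0 = score_Y eY ≥ score_Y eX > score_X eX = 0`.
-/

open MeasureTheory ProbabilityTheory Real Set

/-- Asymmetric squared-loss objective whose minimizer is the `γ`-expectile. -/
noncomputable def phi {Ω : Type*} [MeasurableSpace Ω] (μ : Measure Ω) (γ : ℝ)
    (X : Ω → ℝ) (y : ℝ) : ℝ :=
  γ * ∫ ω, (max (X ω - y) 0) ^ 2 ∂μ + (1 - γ) * ∫ ω, (max (y - X ω) 0) ^ 2 ∂μ

/-- `e` is the γ-expectile of `X` under `μ`: the unique minimizer of `phi`. -/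
def IsExpectile {Ω : Type*} [MeasurableSpace Ω] (μ : Measure Ω) (γ : ℝ)
    (X : Ω → ℝ) (e : ℝ) : Prop :=
  (∀ y, phi μ γ X e ≤ phi μ γ X y) ∧ ∀ y, (∀ z, phi μ γ X y ≤ phi μ γ X z) → y = e

noncomputable def expectileScore {Ω : Type*} [MeasurableSpace Ω] (μ : Measure Ω) (γ : ℝ)
    (X : Ω → ℝ) (y : ℝ) : ℝ :=
  ∫ ω, (γ * max (X ω - y) 0 - (1 - γ) * max (y - X ω) 0) ∂μ

/-- The loss `s ↦ γ (s⁺)² + (1 - γ) (s⁻)²` has a `2`-Lipschitz derivative. -/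
lemma asymSqLoss_add_le {γ : ℝ} (hγ0 : 0 ≤ γ) (hγ1 : γ ≤ 1) (x y t : ℝ) :
    γ * max (x - (y + t)) 0 ^ 2 + (1 - γ) * max (y + t - x) 0 ^ 2 ≤
      γ * max (x - y) 0 ^ 2 + (1 - γ) * max (y - x) 0 ^ 2
        - 2 * t * (γ * max (x - y) 0 - (1 - γ) * max (y - x) 0) + t ^ 2 := by
  rcases le_total x y with hxy | hxy <;> rcases le_total x (y + t) with hxt | hxt <;>
    simp only [max_eq_left, max_eq_right, sub_nonneg, sub_nonpos, hxy, hxt] <;>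
    nlinarith [mul_nonneg hγ0 (sq_nonneg (x - y - t)),
      mul_nonneg (sub_nonneg.2 hγ1) (sq_nonneg (x - y - t)),
      mul_nonneg hγ0 (mul_nonneg (sub_nonneg.2 hxy) (sub_nonneg.2 hxy)),
      mul_nonneg hγ0 (mul_nonneg (sub_nonneg.2 hxy) (sub_nonneg.2 hxt)),
      mul_nonneg (sub_nonneg.2 hγ1) (mul_nonneg (sub_nonneg.2 hxy) (sub_nonneg.2 hxy)),
      mul_nonneg (sub_nonneg.2 hγ1) (mul_nonneg (sub_nonneg.2 hxy) (sub_nonneg.2 hxt))]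

lemma asymLinLoss_strictMono {γ : ℝ} (hγ : γ ∈ Ioo (0 : ℝ) 1) (y : ℝ) :
    StrictMono fun x : ℝ => γ * max (x - y) 0 - (1 - γ) * max (y - x) 0 := by
  obtain ⟨hγ0, hγ1⟩ := hγ
  intro a b hab
  rcases lt_or_ge a y with hay | hay <;> rcases lt_or_ge y b with hby | hby <;>
    simp only [max_eq_left, max_eq_right, sub_nonneg, sub_nonpos, hay, hby, le_of_lt] <;>
    nlinarith

lemma integral_lt_integral_of_ae_le_of_measure_setOf_lt_pos {Ω : Type*} [MeasurableSpace Ω]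
    {μ : Measure Ω} {f g : Ω → ℝ} (hf : Integrable f μ) (hg : Integrable g μ)
    (hle : f ≤ᵐ[μ] g) (hlt : 0 < μ {ω | f ω < g ω}) :
    ∫ ω, f ω ∂μ < ∫ ω, g ω ∂μ := by
  rw [← sub_pos, ← integral_sub hg hf,
    integral_pos_iff_support_of_nonneg_ae (hle.mono fun _ => sub_nonneg.2) (hg.sub hf)]
  exact hlt.trans_le (measure_mono fun ω hω => (sub_pos.2 hω).ne')

section

variable {Ω : Type*} [MeasurableSpace Ω] {μ : Measure Ω} [IsFiniteMeasure μ] {γ : ℝ}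
  {X Y : Ω → ℝ}

lemma integrable_asymLinLoss (hX : Integrable X μ) (γ y : ℝ) :
    Integrable (fun ω => γ * max (X ω - y) 0 - (1 - γ) * max (y - X ω) 0) μ :=
  ((hX.sub (integrable_const y)).pos_part.const_mul γ).sub
    (((integrable_const y).sub hX).pos_part.const_mul (1 - γ))

lemma integrable_asymSqLoss (hX : MemLp X 2 μ) (γ y : ℝ) :
    Integrable (fun ω => γ * max (X ω - y) 0 ^ 2 + (1 - γ) * max (y - X ω) 0 ^ 2) μ :=
  ((hX.sub (memLp_const y)).pos_part.integrable_sq.const_mul γ).add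
    (((memLp_const y).sub hX).pos_part.integrable_sq.const_mul (1 - γ))

lemma phi_eq_integral (hX : MemLp X 2 μ) (γ y : ℝ) :
    phi μ γ X y = ∫ ω, (γ * max (X ω - y) 0 ^ 2 + (1 - γ) * max (y - X ω) 0 ^ 2) ∂μ := by
  rw [integral_add, integral_const_mul, integral_const_mul]
  · rfl
  · exact (hX.sub (memLp_const y)).pos_part.integrable_sq.const_mul γ
  · exact ((memLp_const y).sub hX).pos_part.integrable_sq.const_mul (1 - γ)

lemma phi_add_le (hX : MemLp X 2 μ) (hγ0 : 0 ≤ γ) (hγ1 : γ ≤ 1) (y t : ℝ) :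
    phi μ γ X (y + t) ≤ phi μ γ X y - 2 * t * expectileScore μ γ X y + μ.real univ * t ^ 2 := by
  have hL := integrable_asymSqLoss hX γ y
  have hS := (integrable_asymLinLoss (hX.integrable one_le_two) γ y).const_mul (2 * t)
  calc phi μ γ X (y + t)
      = ∫ ω, (γ * max (X ω - (y + t)) 0 ^ 2 + (1 - γ) * max (y + t - X ω) 0 ^ 2) ∂μ :=
        phi_eq_integral hX γ (y + t)
    _ ≤ ∫ ω, (γ * max (X ω - y) 0 ^ 2 + (1 - γ) * max (y - X ω) 0 ^ 2
          - 2 * t * (γ * max (X ω - y) 0 - (1 - γ) * max (y - X ω) 0) + t ^ 2) ∂μ :=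
        integral_mono (integrable_asymSqLoss hX γ (y + t)) ((hL.sub hS).add (integrable_const _))
          fun ω => asymSqLoss_add_le hγ0 hγ1 (X ω) y t
    _ = _ := by
        rw [integral_add (by exact hL.sub hS) (integrable_const _), integral_sub hL hS,
          integral_const_mul, integral_const, ← phi_eq_integral hX, smul_eq_mul, expectileScore]

lemma expectileScore_eq_zero_of_forall_phi_le (hX : MemLp X 2 μ) (hγ0 : 0 ≤ γ) (hγ1 : γ ≤ 1)
    {e : ℝ} (hmin : ∀ y, phi μ γ X e ≤ phi μ γ X y) : expectileScore μ γ X e = 0 := by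
  set s := expectileScore μ γ X e
  set c := μ.real univ
  have hc : 0 ≤ c := measureReal_nonneg
  have key (t : ℝ) : 0 ≤ -2 * t * s + c * t ^ 2 := by
    linarith [hmin (e + t), phi_add_le hX hγ0 hγ1 e t]
  -- at `t = s / (c + 1)` the right-hand side is `-(c + 2) s² / (c + 1)²`
  have hopt := key (s / (c + 1))
  field_simp at hopt
  nlinarith [sq_nonneg s]

lemma expectileScore_antitone (hX : Integrable X μ) (hγ0 : 0 ≤ γ) (hγ1 : γ ≤ 1) :
    Antitone (expectileScore μ γ X) := fun y z hyz =>
  integral_mono (integrable_asymLinLoss hX γ z) (integrable_asymLinLoss hX γ y) fun ω => by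
    have hγ1' : 0 ≤ 1 - γ := sub_nonneg.2 hγ1
    gcongr

lemma expectileScore_lt_of_ae_le (hX : Integrable X μ) (hY : Integrable Y μ)
    (hγ : γ ∈ Ioo (0 : ℝ) 1) (hXY : ∀ᵐ ω ∂μ, X ω ≤ Y ω) (hlt : 0 < μ {ω | X ω < Y ω}) (y : ℝ) :
    expectileScore μ γ X y < expectileScore μ γ Y y := by
  have hmono := asymLinLoss_strictMono hγ y
  refine integral_lt_integral_of_ae_le_of_measure_setOf_lt_pos (integrable_asymLinLoss hX γ y)
    (integrable_asymLinLoss hY γ y) (hXY.mono fun ω h => hmono.monotone h) ?_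
  simpa only [hmono.lt_iff_lt] using hlt

end

theorem expectile_strict_monotone
    {Ω : Type*} [MeasurableSpace Ω] (μ : Measure Ω) [IsProbabilityMeasure μ]
    (X Y : Ω → ℝ) (hX : MemLp X 2 μ) (hY : MemLp Y 2 μ)
    (hXY : ∀ᵐ ω ∂μ, X ω ≤ Y ω) (hlt : 0 < μ {ω | X ω < Y ω})
    (γ : ℝ) (hγ : γ ∈ Set.Ioo (0:ℝ) 1)
    (eX eY : ℝ) (heX : IsExpectile μ γ X eX) (heY : IsExpectile μ γ Y eY) :
    eX < eY := by
  obtain ⟨hγ0, hγ1⟩ := hγ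
  by_contra! hle
  have hX0 := expectileScore_eq_zero_of_forall_phi_le hX hγ0.le hγ1.le heX.1
  have hY0 := expectileScore_eq_zero_of_forall_phi_le hY hγ0.le hγ1.le heY.1
  have hanti := expectileScore_antitone (hY.integrable one_le_two) hγ0.le hγ1.le hle
  have hstrict := expectileScore_lt_of_ae_le (hX.integrable one_le_two)
    (hY.integrable one_le_two) ⟨hγ0, hγ1⟩ hXY hlt eX
  linarith
end

section
/- Monotonicity of expectiles under first-order stochastic dominance: if X ≤_st Y (i.e. E[u(X)] ≤ E[u(Y)] for every bounded increasing u: ℝ → ℝ), then e_γ(X) ≤ e_γ(Y) for every γ ∈ (0,1). -/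
open MeasureTheory ProbabilityTheory Real Set

/-!
If `eY < eX`, the difference `x ↦ ℓ(x - eY) - ℓ(x - eX)` of the asymmetric squared loss `ℓ`
is nondecreasing, so stochastic dominance gives `φ_X(eY) - φ_X(eX) ≤ φ_Y(eY) - φ_Y(eX)`.
The left side is nonnegative because `eX` minimizes `φ_X`; hence `eX` also minimizes `φ_Y`,
and uniqueness of the expectile forces `eX = eY`.

The comparison `E g(X) ≤ E g(Y)` for monotone continuous `g` comes from the layer-cake formula
applied to `g⁺` and `g⁻`: their superlevel sets are open upper, resp. closed lower, subsets of `ℝ`,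
i.e. (up to the trivial cases) half-lines `(s, ∞)`, resp. complements of such.
-/

section StochasticDominance

lemma IsUpperSet.eq_Ioi_csInf_of_isOpen {U : Set ℝ} (hU : IsUpperSet U) (hUo : IsOpen U)
    (hne : U.Nonempty) (hbdd : BddBelow U) : U = Ioi (sInf U) := by
  ext x
  refine ⟨fun hx => ?_, fun hx => ?_⟩
  · obtain ⟨y, hyx, hy⟩ := Filter.Eventually.exists_lt (hUo.mem_nhds hx)
    exact (csInf_le hbdd hy).trans_lt hyx
  · obtain ⟨a, ha, hax⟩ := exists_lt_of_csInf_lt hne hx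
    exact hU hax.le ha

variable {Ω : Type*} [MeasurableSpace Ω] {μ : Measure Ω} {X Y : Ω → ℝ}

lemma measure_preimage_le_of_isUpperSet_of_isOpen
    (hst : ∀ t : ℝ, μ {ω | t < X ω} ≤ μ {ω | t < Y ω})
    {U : Set ℝ} (hU : IsUpperSet U) (hUo : IsOpen U) : μ (X ⁻¹' U) ≤ μ (Y ⁻¹' U) := by
  rcases U.eq_empty_or_nonempty with rfl | hne
  · simp
  by_cases hbdd : BddBelow U
  · rw [hU.eq_Ioi_csInf_of_isOpen hUo hne hbdd]
    exact hst _
  · have hUniv : U = univ := eq_univ_of_forall fun x =>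
      let ⟨_, ha, hax⟩ := not_bddBelow_iff.1 hbdd x
      hU hax.le ha
    simp [hUniv]

lemma measure_preimage_le_of_isLowerSet_of_isClosed [IsFiniteMeasure μ]
    (hXm : AEMeasurable X μ) (hYm : AEMeasurable Y μ)
    (hst : ∀ t : ℝ, μ {ω | t < X ω} ≤ μ {ω | t < Y ω})
    {L : Set ℝ} (hL : IsLowerSet L) (hLc : IsClosed L) : μ (Y ⁻¹' L) ≤ μ (X ⁻¹' L) := by
  have hcompl : ∀ Z : Ω → ℝ, AEMeasurable Z μ → μ (Z ⁻¹' L) = μ univ - μ (Z ⁻¹' Lᶜ) :=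
    fun Z hZ => by
      rw [← measure_compl₀ (hZ.nullMeasurableSet_preimage hLc.isOpen_compl.measurableSet)
        (measure_ne_top _ _), preimage_compl, compl_compl]
  rw [hcompl X hXm, hcompl Y hYm]
  exact tsub_le_tsub_left
    (measure_preimage_le_of_isUpperSet_of_isOpen hst hL.compl hLc.isOpen_compl) _

lemma lintegral_ofReal_comp_le_of_monotone
    (hXm : AEMeasurable X μ) (hYm : AEMeasurable Y μ)
    (hst : ∀ t : ℝ, μ {ω | t < X ω} ≤ μ {ω | t < Y ω})
    {g : ℝ → ℝ} (hg : Monotone g) (hgc : Continuous g) :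
    ∫⁻ ω, ENNReal.ofReal (g (X ω)) ∂μ ≤ ∫⁻ ω, ENNReal.ofReal (g (Y ω)) ∂μ := by
  have hposc : Continuous fun x => max (g x) 0 := hgc.max continuous_const
  have hpos : ∀ x, ENNReal.ofReal (g x) = ENNReal.ofReal (max (g x) 0) := fun x => by simp
  simp_rw [hpos]
  rw [lintegral_eq_lintegral_meas_lt (f := fun ω => max (g (X ω)) 0) μ
      (ae_of_all _ fun _ => le_max_right _ _) (hposc.measurable.comp_aemeasurable hXm),
    lintegral_eq_lintegral_meas_lt (f := fun ω => max (g (Y ω)) 0) μ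
      (ae_of_all _ fun _ => le_max_right _ _) (hposc.measurable.comp_aemeasurable hYm)]
  exact lintegral_mono fun t => measure_preimage_le_of_isUpperSet_of_isOpen hst
    (fun _ _ hab ha => ha.trans_le (max_le_max_right 0 (hg hab)))
    (isOpen_lt continuous_const hposc)

lemma lintegral_ofReal_comp_le_of_antitone [IsFiniteMeasure μ]
    (hXm : AEMeasurable X μ) (hYm : AEMeasurable Y μ)
    (hst : ∀ t : ℝ, μ {ω | t < X ω} ≤ μ {ω | t < Y ω})
    {g : ℝ → ℝ} (hg : Antitone g) (hgc : Continuous g) :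
    ∫⁻ ω, ENNReal.ofReal (g (Y ω)) ∂μ ≤ ∫⁻ ω, ENNReal.ofReal (g (X ω)) ∂μ := by
  have hposc : Continuous fun x => max (g x) 0 := hgc.max continuous_const
  have hpos : ∀ x, ENNReal.ofReal (g x) = ENNReal.ofReal (max (g x) 0) := fun x => by simp
  simp_rw [hpos]
  rw [lintegral_eq_lintegral_meas_le (f := fun ω => max (g (X ω)) 0) μ
      (ae_of_all _ fun _ => le_max_right _ _) (hposc.measurable.comp_aemeasurable hXm),
    lintegral_eq_lintegral_meas_le (f := fun ω => max (g (Y ω)) 0) μ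
      (ae_of_all _ fun _ => le_max_right _ _) (hposc.measurable.comp_aemeasurable hYm)]
  exact lintegral_mono fun t => measure_preimage_le_of_isLowerSet_of_isClosed hXm hYm hst
    (fun _ _ hab ha => ha.trans (max_le_max_right 0 (hg hab)))
    (isClosed_le continuous_const hposc)

theorem integral_comp_le_of_monotone [IsFiniteMeasure μ]
    (hXm : AEMeasurable X μ) (hYm : AEMeasurable Y μ)
    (hst : ∀ t : ℝ, μ {ω | t < X ω} ≤ μ {ω | t < Y ω})
    {g : ℝ → ℝ} (hg : Monotone g) (hgc : Continuous g)
    (hgX : Integrable (fun ω => g (X ω)) μ) (hgY : Integrable (fun ω => g (Y ω)) μ) :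
    ∫ ω, g (X ω) ∂μ ≤ ∫ ω, g (Y ω) ∂μ := by
  rw [integral_eq_lintegral_pos_part_sub_lintegral_neg_part hgX,
    integral_eq_lintegral_pos_part_sub_lintegral_neg_part hgY]
  exact sub_le_sub
    (ENNReal.toReal_mono hgY.lintegral_lt_top.ne
      (lintegral_ofReal_comp_le_of_monotone hXm hYm hst hg hgc))
    (ENNReal.toReal_mono hgX.neg.lintegral_lt_top.ne
      (lintegral_ofReal_comp_le_of_antitone hXm hYm hst hg.neg hgc.neg))

end StochasticDominance

section Expectile

def expectileLoss (γ y x : ℝ) : ℝ :=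
  γ * max (x - y) 0 ^ 2 + (1 - γ) * max (y - x) 0 ^ 2

lemma monotone_max_sub_sq_sub {y₁ y₂ : ℝ} (hy : y₁ ≤ y₂) :
    Monotone fun x => max (x - y₁) 0 ^ 2 - max (x - y₂) 0 ^ 2 := by
  intro a b hab
  simp only [max_def]
  split_ifs <;> nlinarith

lemma monotone_expectileLoss_sub {γ y₁ y₂ : ℝ} (hγ : γ ∈ Icc 0 1) (hy : y₁ ≤ y₂) :
    Monotone fun x => expectileLoss γ y₁ x - expectileLoss γ y₂ x := by
  have hright := monotone_max_sub_sq_sub hy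
  have hleft : Monotone fun x => max (y₁ - x) 0 ^ 2 - max (y₂ - x) 0 ^ 2 := fun a b hab => by
    have := monotone_max_sub_sq_sub (neg_le_neg hy) (neg_le_neg hab)
    simp only [sub_neg_eq_add, neg_add_eq_sub] at this
    linarith
  have hsplit : (fun x => expectileLoss γ y₁ x - expectileLoss γ y₂ x) = fun x =>
      γ * (max (x - y₁) 0 ^ 2 - max (x - y₂) 0 ^ 2)
        + (1 - γ) * (max (y₁ - x) 0 ^ 2 - max (y₂ - x) 0 ^ 2) := by
    funext x
    simp only [expectileLoss]
    ring
  rw [hsplit]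
  exact (hright.const_mul hγ.1).add (hleft.const_mul (sub_nonneg.2 hγ.2))

variable {Ω : Type*} [MeasurableSpace Ω] {μ : Measure Ω} [IsFiniteMeasure μ] {X Y : Ω → ℝ}

lemma integrable_expectileLoss (hX : MemLp X 2 μ) (γ y : ℝ) :
    Integrable (fun ω => expectileLoss γ y (X ω)) μ :=
  (((hX.sub (memLp_const y)).pos_part.integrable_sq).const_mul γ).add
    ((((memLp_const y).sub hX).pos_part.integrable_sq).const_mul (1 - γ))

lemma phi_eq_integral_expectileLoss (hX : MemLp X 2 μ) (γ y : ℝ) :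
    phi μ γ X y = ∫ ω, expectileLoss γ y (X ω) ∂μ := by
  rw [phi, ← integral_const_mul, ← integral_const_mul, ← integral_add]
  · rfl
  · exact ((hX.sub (memLp_const y)).pos_part.integrable_sq).const_mul γ
  · exact (((memLp_const y).sub hX).pos_part.integrable_sq).const_mul (1 - γ)

lemma phi_sub_phi_le_of_stochastic_dominance (hX : MemLp X 2 μ) (hY : MemLp Y 2 μ)
    (hst : ∀ t : ℝ, μ {ω | t < X ω} ≤ μ {ω | t < Y ω})
    {γ y₁ y₂ : ℝ} (hγ : γ ∈ Icc 0 1) (hy : y₁ ≤ y₂) :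
    phi μ γ X y₁ - phi μ γ X y₂ ≤ phi μ γ Y y₁ - phi μ γ Y y₂ := by
  rw [phi_eq_integral_expectileLoss hX, phi_eq_integral_expectileLoss hX,
    phi_eq_integral_expectileLoss hY, phi_eq_integral_expectileLoss hY,
    ← integral_sub (integrable_expectileLoss hX γ y₁) (integrable_expectileLoss hX γ y₂),
    ← integral_sub (integrable_expectileLoss hY γ y₁) (integrable_expectileLoss hY γ y₂)]
  exact integral_comp_le_of_monotone hX.aemeasurable hY.aemeasurable hst
    (monotone_expectileLoss_sub hγ hy) (by unfold expectileLoss; fun_prop)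
    ((integrable_expectileLoss hX γ y₁).sub (integrable_expectileLoss hX γ y₂))
    ((integrable_expectileLoss hY γ y₁).sub (integrable_expectileLoss hY γ y₂))

end Expectile

theorem expectile_monotone_of_stochastic_dominance
    {Ω : Type*} [MeasurableSpace Ω] (μ : Measure Ω) [IsProbabilityMeasure μ]
    (X Y : Ω → ℝ) (hX : MemLp X 2 μ) (hY : MemLp Y 2 μ)
    (hst : ∀ t : ℝ, μ {ω | t < X ω} ≤ μ {ω | t < Y ω})
    (γ : ℝ) (hγ : γ ∈ Set.Ioo (0:ℝ) 1)
    (eX eY : ℝ) (heX : IsExpectile μ γ X eX) (heY : IsExpectile μ γ Y eY) :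
    eX ≤ eY := by
  by_contra! hlt
  have hincr := phi_sub_phi_le_of_stochastic_dominance hX hY hst (Ioo_subset_Icc_self hγ) hlt.le
  have hmin : ∀ z, phi μ γ Y eX ≤ phi μ γ Y z := fun z => by linarith [heX.1 eY, heY.1 z]
  exact hlt.ne' (heY.2 eX hmin)
end
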